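/- arXiv:1510.01814 — 3 statements merged into one kernel-verified Lean document; each statement's English description precedes it below -/
import Mathlib

section
/- In a tree T, if u and v are adjacent vertices and I is a finite set of vertices of T such that ecc(v, I) > ecc(u, I), where ecc(w, I) = max_{x ∈ I} dist(w, x), then there exists a vertex w ∈ I lying in the component of T − v containing u such that dist(v, w) = dist(u, w) + 1 = ecc(v, I). -/
lemma reach_of_walk_avoid {V : Type*} (G : SimpleGraph V) (v : V) :
    ∀ {a b : V} (p : G.Walk a b), v ∉ p.support →
      ∀ (ha : a ∈ {x : V | x ≠ v}) (hb : b ∈ {x : V | x ≠ v}),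
      (G.induce {x : V | x ≠ v}).Reachable ⟨a, ha⟩ ⟨b, hb⟩
  | a, _, SimpleGraph.Walk.nil, _, ha, hb => SimpleGraph.Reachable.refl _
  | a, b, SimpleGraph.Walk.cons h q, hv, ha, hb => by
    simp only [SimpleGraph.Walk.support_cons, List.mem_cons] at hv
    push_neg at hv
    have hc : _ ∈ {x : V | x ≠ v} := fun he => hv.2 (he ▸ q.start_mem_support)
    exact SimpleGraph.Reachable.trans
      (SimpleGraph.Adj.reachable
        (show (G.induce {x : V | x ≠ v}).Adj ⟨a, ha⟩ ⟨_, hc⟩ from h))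
      (reach_of_walk_avoid G v q hv.2 hc hb)

/-- In a tree, if `v` has strictly larger eccentricity over `I` than its neighbor `u`,
then there is `w ∈ I` on `u`'s side of the edge `(u,v)` (i.e. in the component of
`T - v` containing `u`) with `dist v w = dist u w + 1 = ecc(v, I)`. -/
theorem tree_ecc_witness {V : Type*} [Fintype V] (G : SimpleGraph V) (hT : G.IsTree)
    (u v : V) (huv : G.Adj u v) (I : Finset V) (hI : I.Nonempty)
    (hecc : (I.sup fun x => G.dist u x) < I.sup fun x => G.dist v x) :
    ∃ w ∈ I, ∃ hwv : w ≠ v,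
      (G.induce {x : V | x ≠ v}).Reachable
          ⟨u, show u ∈ {x : V | x ≠ v} from huv.ne⟩ ⟨w, hwv⟩ ∧
        G.dist v w = G.dist u w + 1 ∧
        G.dist v w = I.sup fun x => G.dist v x := by
  have hconn := hT.isConnected
  obtain ⟨w, hwI, hw⟩ := Finset.exists_mem_eq_sup I hI (fun x => G.dist v x)
  have hle : G.dist u w ≤ I.sup fun x => G.dist u x := Finset.le_sup hwI
  have hlt : G.dist u w < G.dist v w := lt_of_le_of_lt hle (hecc.trans_eq hw)
  have hvu1 : G.dist v u = 1 := (SimpleGraph.dist_eq_one_iff_adj).2 huv.symm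
  have htri : G.dist v w ≤ G.dist v u + G.dist u w := hconn.dist_triangle
  have heq : G.dist v w = G.dist u w + 1 := by omega
  have hwv : w ≠ v := by
    rintro rfl
    simp [SimpleGraph.dist_self] at hlt
  refine ⟨w, hwI, hwv, ?_, heq, hw.symm⟩
  obtain ⟨p, hp⟩ := hconn.exists_path_of_dist u w
  have hvp : v ∉ p.support := by
    intro hv
    obtain ⟨q, r, hqr⟩ := SimpleGraph.Walk.mem_support_iff_exists_append.1 hv
    have h1 : G.dist u v ≤ q.length := SimpleGraph.dist_le q
    have h2 : G.dist v w ≤ r.length := SimpleGraph.dist_le r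
    have h3 : p.length = q.length + r.length := by
      rw [hqr, SimpleGraph.Walk.length_append]
    have huv1 : G.dist u v = 1 := (SimpleGraph.dist_eq_one_iff_adj).2 huv
    omega
  exact reach_of_walk_avoid G v p hvp huv.ne hwv
end

section
/- Under the independent cascade model on a tree network with complete snapshot observation at an unknown time t whose distribution satisfies P(t) ≥ P(t+1) for all t, and uniform prior on the source, if u and v are adjacent vertices with ecc(v, I) > ecc(u, I) (where I is the infected set and eccentricity is over I in the infection subgraph), then P(v | O) ≤ P(u | O). -/
open scoped Classical

/-- The probability of a particular live-edge realization `s ⊆ E(G)` under the IC model: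
each edge `e` of `G` is live independently with probability `q e`. -/
noncomputable def liveEdgeWeight {V : Type*} [Fintype V] (G : SimpleGraph V)
    [DecidableEq V] (q : Sym2 V → ℝ) (s : Finset (Sym2 V)) : ℝ :=
  ∏ e ∈ G.edgeFinset, if e ∈ s then q e else 1 - q e

/-- The set of nodes infected by time `t` when the source is `v` and the live edges
are `s`: those reachable from `v` by a walk of length at most `t` using live edges. -/
def infectedAt {V : Type*} (s : Finset (Sym2 V)) (v : V) (t : ℕ) : Set V :=
  {w | ∃ p : (SimpleGraph.fromEdgeSet (↑s : Set (Sym2 V))).Walk v w, p.length ≤ t}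

/-- Likelihood `P(O | source = v, observation time = t)` of observing infected set `I`
under the IC model on `G` with infection probabilities `q`, via the live-edge model. -/
noncomputable def snapshotLikelihood {V : Type*} [Fintype V] (G : SimpleGraph V)
    [DecidableEq V] (q : Sym2 V → ℝ) (v : V) (t : ℕ) (I : Finset V) : ℝ :=
  ∑ s ∈ G.edgeFinset.powerset,
    liveEdgeWeight G q s * (if infectedAt s v t = (↑I : Set V) then 1 else 0)

/-- Posterior probability (up to the common normalization `P(O)`) that `v` is the
source, with uniform prior on the source and observation-time distribution `PT`. -/
noncomputable def sourcePosterior {V : Type*} [Fintype V] (G : SimpleGraph V)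
    [DecidableEq V] (q : Sym2 V → ℝ) (PT : ℕ → ℝ) (I : Finset V) (v : V) : ℝ :=
  (1 / (Fintype.card V : ℝ)) * ∑' t : ℕ, PT t * snapshotLikelihood G q v t I

/-!
Fix the set `s` of live edges. Live paths are paths of the tree, so a node is infected from `a` by
time `t` iff it is live-reachable from `a` and within tree distance `t` of it. If the infection from
`v` shows exactly `I` at time `t + 1`, the eccentricity of `v` is at most `t + 1`, hence that of `u`
at most `t`, and `u` is live-reachable from `v`; so the infection from `u` shows exactly `I` at
time `t`. Thus `P(O | v, t + 1) ≤ P(O | u, t)`, while `P(O | v, 0) = 0` because `I ≠ {v}`. Pairing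
time `t + 1` for `v` with time `t` for `u` and using `P(t + 1) ≤ P(t)` gives the inequality.
-/

lemma summable_mul_of_nonneg_of_le {ι : Type*} {a f : ι → ℝ} {C : ℝ} (ha : Summable a)
    (ha_nonneg : ∀ i, 0 ≤ a i) (hf_nonneg : ∀ i, 0 ≤ f i) (hf_le : ∀ i, f i ≤ C) :
    Summable fun i => a i * f i :=
  (ha.mul_right C).of_nonneg_of_le (fun i => mul_nonneg (ha_nonneg i) (hf_nonneg i))
    fun i => mul_le_mul_of_nonneg_left (hf_le i) (ha_nonneg i)

lemma tsum_mul_le_tsum_mul_of_le_succ {a f g : ℕ → ℝ} (ha_nonneg : ∀ t, 0 ≤ a t)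
    (ha_succ : ∀ t, a (t + 1) ≤ a t) (hf_nonneg : ∀ t, 0 ≤ f t) (hf_zero : f 0 = 0)
    (hfg : ∀ t, f (t + 1) ≤ g t) (hf : Summable fun t => a t * f t)
    (hg : Summable fun t => a t * g t) :
    ∑' t, a t * f t ≤ ∑' t, a t * g t := by
  rw [hf.tsum_eq_zero_add, hf_zero, mul_zero, zero_add]
  exact Summable.tsum_le_tsum
    (fun t => mul_le_mul (ha_succ t) (hfg t) (hf_nonneg (t + 1)) (ha_nonneg t))
    ((summable_nat_add_iff 1).2 hf) hg

namespace SimpleGraph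

variable {V : Type*}

lemma IsAcyclic.length_eq_dist_of_isPath {G H : SimpleGraph V} (hG : G.IsAcyclic) (hHG : H ≤ G)
    {a b : V} {p : H.Walk a b} (hp : p.IsPath) : p.length = G.dist a b := by
  obtain ⟨r, hr, hr_length⟩ := (p.reachable.mono hHG).exists_path_of_dist
  have hpr := (hG.subsingleton_path a b).elim ⟨p.mapLe hHG, hp.mapLe hHG⟩ ⟨r, hr⟩
  rw [← hr_length, ← Walk.length_mapLe hHG p]
  exact congrArg (fun r : G.Path a b => r.1.length) hpr

end SimpleGraph

section Infection

open SimpleGraph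

variable {V : Type*}

lemma infectedAt_zero (s : Finset (Sym2 V)) (v : V) : infectedAt s v 0 = {v} := by
  ext w
  simp only [infectedAt, Set.mem_ofPred_eq, nonpos_iff_eq_zero, Walk.exists_length_eq_zero_iff,
    Set.mem_singleton_iff]
  exact eq_comm

lemma fromEdgeSet_le_of_subset_edgeSet {G : SimpleGraph V} {s : Set (Sym2 V)}
    (hs : s ⊆ G.edgeSet) : fromEdgeSet s ≤ G := by
  simpa using fromEdgeSet_mono (s := s) hs

lemma mem_infectedAt_iff {G : SimpleGraph V} (hG : G.IsAcyclic) {s : Finset (Sym2 V)}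
    (hs : (↑s : Set (Sym2 V)) ⊆ G.edgeSet) {a w : V} {t : ℕ} :
    w ∈ infectedAt s a t ↔ (fromEdgeSet (↑s : Set (Sym2 V))).Reachable a w ∧ G.dist a w ≤ t := by
  have hle := fromEdgeSet_le_of_subset_edgeSet hs
  constructor
  · rintro ⟨p, hp⟩
    refine ⟨p.reachable, ?_⟩
    rw [← hG.length_eq_dist_of_isPath hle p.bypass_isPath]
    exact p.length_bypass_le_length.trans hp
  · rintro ⟨hr, hdist⟩
    obtain ⟨p, hp, -⟩ := hr.exists_path_of_dist
    exact ⟨p, (hG.length_eq_dist_of_isPath hle hp).trans_le hdist⟩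

theorem infectedAt_eq_of_infectedAt_succ_eq {G : SimpleGraph V} (hG : G.IsAcyclic)
    {s : Finset (Sym2 V)} (hs : (↑s : Set (Sym2 V)) ⊆ G.edgeSet) {I : Finset V} {u v : V}
    (hu : u ∈ I) (huv : G.Adj u v)
    (hecc : (I.sup fun x => G.dist u x) < I.sup fun x => G.dist v x) {t : ℕ}
    (h : infectedAt s v (t + 1) = I) : infectedAt s u t = I := by
  have hmem : ∀ w, w ∈ I ↔
      (fromEdgeSet (↑s : Set (Sym2 V))).Reachable v w ∧ G.dist v w ≤ t + 1 := fun w => by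
    rw [← mem_infectedAt_iff hG hs, h, Finset.mem_coe]
  have hvu := ((hmem u).1 hu).1
  have hecc_u : (I.sup fun x => G.dist u x) ≤ t := by
    have : (I.sup fun x => G.dist v x) ≤ t + 1 := Finset.sup_le fun x hx => ((hmem x).1 hx).2
    omega
  ext w
  rw [mem_infectedAt_iff hG hs, Finset.mem_coe]
  constructor
  · rintro ⟨huw, hdist⟩
    refine (hmem w).2 ⟨hvu.trans huw, ?_⟩
    have := (huw.mono (fromEdgeSet_le_of_subset_edgeSet hs)).dist_triangle_right v
    rw [dist_eq_one_iff_adj.2 huv.symm] at this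
    omega
  · intro hw
    exact ⟨hvu.symm.trans ((hmem w).1 hw).1, (Finset.le_sup hw).trans hecc_u⟩

end Infection

section Likelihood

variable {V : Type*} [Fintype V] [DecidableEq V] {G : SimpleGraph V} {q : Sym2 V → ℝ}

lemma liveEdgeWeight_nonneg (hq0 : ∀ e ∈ G.edgeFinset, 0 ≤ q e)
    (hq1 : ∀ e ∈ G.edgeFinset, q e ≤ 1) (s : Finset (Sym2 V)) : 0 ≤ liveEdgeWeight G q s :=
  Finset.prod_nonneg fun e he => by
    split_ifs
    · exact hq0 e he
    · exact sub_nonneg.2 (hq1 e he)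

lemma snapshotLikelihood_nonneg (hq0 : ∀ e ∈ G.edgeFinset, 0 ≤ q e)
    (hq1 : ∀ e ∈ G.edgeFinset, q e ≤ 1) (v : V) (t : ℕ) (I : Finset V) :
    0 ≤ snapshotLikelihood G q v t I :=
  Finset.sum_nonneg fun s _ =>
    mul_nonneg (liveEdgeWeight_nonneg hq0 hq1 s) (by split_ifs <;> norm_num)

lemma snapshotLikelihood_le_sum_liveEdgeWeight (hq0 : ∀ e ∈ G.edgeFinset, 0 ≤ q e)
    (hq1 : ∀ e ∈ G.edgeFinset, q e ≤ 1) (v : V) (t : ℕ) (I : Finset V) :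
    snapshotLikelihood G q v t I ≤ ∑ s ∈ G.edgeFinset.powerset, liveEdgeWeight G q s :=
  Finset.sum_le_sum fun s _ =>
    mul_le_of_le_one_right (liveEdgeWeight_nonneg hq0 hq1 s) (by split_ifs <;> norm_num)

lemma snapshotLikelihood_eq_zero {v : V} {t : ℕ} {I : Finset V}
    (h : ∀ s : Finset (Sym2 V), infectedAt s v t ≠ I) : snapshotLikelihood G q v t I = 0 :=
  Finset.sum_eq_zero fun s _ => by simp [h s]

lemma snapshotLikelihood_le_of_forall_infectedAt (hq0 : ∀ e ∈ G.edgeFinset, 0 ≤ q e)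
    (hq1 : ∀ e ∈ G.edgeFinset, q e ≤ 1) {u v : V} {t t' : ℕ} {I : Finset V}
    (h : ∀ s : Finset (Sym2 V), (↑s : Set (Sym2 V)) ⊆ G.edgeSet →
      infectedAt s v t = I → infectedAt s u t' = I) :
    snapshotLikelihood G q v t I ≤ snapshotLikelihood G q u t' I := by
  refine Finset.sum_le_sum fun s hs => ?_
  have hs : (↑s : Set (Sym2 V)) ⊆ G.edgeSet := by
    simpa using Finset.coe_subset.2 (Finset.mem_powerset.1 hs)
  by_cases hv : infectedAt s v t = I
  · simp [hv, h s hs hv]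
  · rw [if_neg hv, mul_zero]
    exact mul_nonneg (liveEdgeWeight_nonneg hq0 hq1 s) (by split_ifs <;> norm_num)

end Likelihood

theorem neighboring_nodes_inequality_general {V : Type*} [Fintype V] [DecidableEq V]
    (G : SimpleGraph V) (hG : G.IsTree) (q : Sym2 V → ℝ)
    (hq0 : ∀ e ∈ G.edgeFinset, 0 ≤ q e) (hq1 : ∀ e ∈ G.edgeFinset, q e ≤ 1)
    (PT : ℕ → ℝ) (hPT0 : ∀ t, 0 ≤ PT t) (hPTmono : ∀ t, PT (t + 1) ≤ PT t)
    (hPTsum : ∑' t : ℕ, PT t = 1)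
    (I : Finset V) (u v : V) (hu : u ∈ I) (huv : G.Adj u v)
    (hecc : (I.sup fun x => G.dist u x) < I.sup fun x => G.dist v x) :
    sourcePosterior G q PT I v ≤ sourcePosterior G q PT I u := by
  have hPT : Summable PT := by
    by_contra h
    simp [tsum_eq_zero_of_not_summable h] at hPTsum
  have hsummable (a : V) : Summable fun t => PT t * snapshotLikelihood G q a t I :=
    summable_mul_of_nonneg_of_le hPT hPT0 (fun t => snapshotLikelihood_nonneg hq0 hq1 a t I)
      fun t => snapshotLikelihood_le_sum_liveEdgeWeight hq0 hq1 a t I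
  have hzero : snapshotLikelihood G q v 0 I = 0 := snapshotLikelihood_eq_zero fun s hs => by
    rw [infectedAt_zero, eq_comm, Finset.coe_eq_singleton] at hs
    simp [hs] at hecc
  have hstep (t : ℕ) : snapshotLikelihood G q v (t + 1) I ≤ snapshotLikelihood G q u t I :=
    snapshotLikelihood_le_of_forall_infectedAt hq0 hq1 fun _ hs =>
      infectedAt_eq_of_infectedAt_succ_eq hG.isAcyclic hs hu huv hecc
  unfold sourcePosterior
  refine mul_le_mul_of_nonneg_left ?_ (by positivity)
  exact tsum_mul_le_tsum_mul_of_le_succ hPT0 hPTmono (snapshotLikelihood_nonneg hq0 hq1 v · I)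
    hzero hstep (hsummable v) (hsummable u)

/-- Neighboring nodes inequality: on a tree, under the IC model with uniform prior on
the source and a non-increasing observation-time distribution, if `u` and `v` are
adjacent infected nodes and the infection eccentricity of `v` is strictly larger than
that of `u`, then the posterior probability of `v` is at most that of `u`. -/
theorem neighboring_nodes_inequality {V : Type*} [Fintype V] [DecidableEq V]
    (G : SimpleGraph V) (hG : G.IsTree) (q : Sym2 V → ℝ)
    (hq0 : ∀ e ∈ G.edgeFinset, 0 ≤ q e) (hq1 : ∀ e ∈ G.edgeFinset, q e ≤ 1)
    (PT : ℕ → ℝ) (hPT0 : ∀ t, 0 ≤ PT t) (hPTmono : ∀ t, PT (t + 1) ≤ PT t)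
    (hPTsum : ∑' t : ℕ, PT t = 1)
    (I : Finset V) (u v : V) (hu : u ∈ I) (hv : v ∈ I) (huv : G.Adj u v)
    (hecc : (I.sup fun x => G.dist u x) < I.sup fun x => G.dist v x) :
    sourcePosterior G q PT I v ≤ sourcePosterior G q PT I u :=
  neighboring_nodes_inequality_general G hG q hq0 hq1 PT hPT0 hPTmono hPTsum I u v hu huv hecc
end

section
/- Let G be a finite graph with vertex set V and let K(O, v, t) = { spanning subgraphs T of G (on vertex set V) such that every w ∈ I has dist_T(v, w) ≤ t and every w ∈ H has dist_T(v, w) > t }, where {I, H} is a partition of V with v ∈ I. In a tree network G, if u, v are adjacent with ecc(v, I) > ecc(u, I) and t ≥ ecc(u, I), then K(O, v, t+1) ⊆ K(O, u, t). -/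
/-- The set of feasible live-edge graphs for snapshot `(I, H)`, candidate source `v`
and observation time `t`: spanning subgraphs `T ≤ G` in which every infected node is
reachable from `v` within `t` hops and no healthy node is. -/
def feasibleLiveEdge {V : Type*} (G : SimpleGraph V) (I H : Set V) (v : V) (t : ℕ) :
    Set (SimpleGraph V) :=
  {T | T ≤ G ∧ (∀ w ∈ I, T.Reachable v w ∧ T.dist v w ≤ t) ∧
    ∀ w ∈ H, ¬(T.Reachable v w ∧ T.dist v w ≤ t)}

/-- In an acyclic graph, any path has length equal to the distance of its endpoints. -/
lemma path_length_eq_dist {V : Type*} {G : SimpleGraph V} (hG : G.IsAcyclic)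
    {a b : V} (p : G.Walk a b) (hp : p.IsPath) : p.length = G.dist a b := by
  obtain ⟨q, hq, hql⟩ := (p.reachable).exists_path_of_dist
  have := hG.path_unique ⟨p, hp⟩ ⟨q, hq⟩
  rw [← hql]
  exact congrArg (fun r : G.Path a b => (r : G.Walk a b).length) this

/-- Distances in a subgraph of an acyclic graph agree with distances in the big graph. -/
lemma dist_subgraph_eq {V : Type*} {G T : SimpleGraph V} (hG : G.IsAcyclic) (hle : T ≤ G)
    {a b : V} (hr : T.Reachable a b) : T.dist a b = G.dist a b := by
  obtain ⟨p, hp, hpl⟩ := hr.exists_path_of_dist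
  have hmap : (p.mapLe hle).IsPath := hp.mapLe hle
  have := path_length_eq_dist hG _ hmap
  rw [SimpleGraph.Walk.mapLe, SimpleGraph.Walk.length_map] at this
  rw [← hpl, this]

theorem feasible_live_edge_subset {V : Type*} [Fintype V] (G : SimpleGraph V)
    (hG : G.IsTree) (I H : Set V) (hpart : ∀ x : V, (x ∈ I ∧ x ∉ H) ∨ (x ∈ H ∧ x ∉ I))
    (u v : V) (huv : G.Adj u v) (hv : v ∈ I) (t : ℕ)
    (hecc : (⨆ x ∈ I, G.dist u x) < ⨆ x ∈ I, G.dist v x)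
    (ht : (⨆ x ∈ I, G.dist u x) ≤ t) :
    feasibleLiveEdge G I H v (t + 1) ⊆ feasibleLiveEdge G I H u t := by
  have hconn := hG.isConnected
  have hac := hG.IsAcyclic
  set S := ⨆ x ∈ I, G.dist u x with hS
  have hbdd : ∀ z : V, BddAbove (Set.range fun x => ⨆ _ : x ∈ I, G.dist z x) :=
    fun _ => (Set.finite_range _).bddAbove
  have hle_S : ∀ x ∈ I, G.dist u x ≤ S := by
    intro x hx
    have := le_ciSup (hbdd u) x
    rwa [ciSup_pos hx] at this
  -- find a witness x ∈ I with S < G.dist v x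
  obtain ⟨x, hxlt⟩ := (lt_ciSup_iff' (hbdd v)).mp hecc
  have hx : x ∈ I := by
    by_contra hx
    rw [ciSup_neg hx] at hxlt
    exact absurd hxlt (by simp)
  rw [ciSup_pos hx] at hxlt
  -- G.dist v x = G.dist u x + 1
  have hdvu : G.dist v u = 1 := SimpleGraph.dist_eq_one_iff_adj.mpr huv.symm
  have hux : G.dist u x ≤ S := hle_S x hx
  have htri : G.dist v x ≤ G.dist u x + 1 := by
    have := hconn.dist_triangle (u := v) (v := u) (w := x)
    omega
  intro T hT
  obtain ⟨hleT, hI, hH⟩ := hT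
  classical
  -- T-reachability of v and u
  obtain ⟨hrvx, _⟩ := hI x hx
  obtain ⟨p, hp, hpl⟩ := hrvx.exists_path_of_dist
  set pG : G.Walk v x := p.mapLe hleT with hpG
  have hpGpath : pG.IsPath := hp.mapLe hleT
  -- build the canonical G-path v - u - ... - x
  obtain ⟨q, hq, hql⟩ := (hconn.preconnected u x).exists_path_of_dist
  have hvq : v ∉ q.support := by
    intro hvq
    have h1 : (q.dropUntil v hvq).length ≤ q.length := SimpleGraph.Walk.length_dropUntil_le q hvq
    have h2 : G.dist v x ≤ (q.dropUntil v hvq).length := SimpleGraph.dist_le _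
    have h3 : G.dist u x ≤ G.dist v x := by omega
    omega
  set P2 : G.Walk v x := SimpleGraph.Walk.cons huv.symm q with hP2
  have hP2path : P2.IsPath := hq.cons hvq
  have hu_mem : u ∈ pG.support := by
    have := hac.path_unique ⟨pG, hpGpath⟩ ⟨P2, hP2path⟩
    have h' : pG = P2 := congrArg (fun r : G.Path v x => (r : G.Walk v x)) this
    rw [h', hP2]
    simp [SimpleGraph.Walk.support_cons]
  have hu_memT : u ∈ p.support := by
    rw [hpG, SimpleGraph.Walk.mapLe, SimpleGraph.Walk.support_map] at hu_mem
    simpa using hu_mem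
  have hrvu : T.Reachable v u := ⟨p.takeUntil u hu_memT⟩
  refine ⟨hleT, ?_, ?_⟩
  · intro w hw
    obtain ⟨hrw, _⟩ := hI w hw
    refine ⟨hrvu.symm.trans hrw, ?_⟩
    rw [dist_subgraph_eq hac hleT (hrvu.symm.trans hrw)]
    exact le_trans (hle_S w hw) ht
  · rintro w hw ⟨hruw, hdw⟩
    have hrvw : T.Reachable v w := hrvu.trans hruw
    refine hH w hw ⟨hrvw, ?_⟩
    rw [dist_subgraph_eq hac hleT hrvw]
    rw [dist_subgraph_eq hac hleT hruw] at hdw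
    have := hconn.dist_triangle (u := v) (v := u) (w := w)
    omega
end
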